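/- arXiv:2011.04938 — 2 statements merged into one kernel-verified Lean document; each statement's English description precedes it below -/
import Mathlib

section
/- Let 0 < α < 1, T > 0, N ∈ ℕ. Let A : [0,T] → M_N(ℝ) be measurable and essentially bounded, and let F : [0,T] → ℝ^N be measurable and essentially bounded. Then the Volterra integral equation c(t) = -(1/Γ(α)) ∫₀^t (t-τ)^{α-1} A(τ) c(τ) dτ + (1/Γ(α)) ∫₀^t (t-τ)^{α-1} F(τ) dτ, t ∈ [0,T], has exactly one continuous solution c : [0,T] → ℝ^N (in particular c(0) = 0). -/
open MeasureTheory

/-- The right-hand side of the Volterra integral equation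
`c(t) = -(1/Γ(α)) ∫_0^t (t-τ)^(α-1) A(τ) c(τ) dτ + (1/Γ(α)) ∫_0^t (t-τ)^(α-1) F(τ) dτ`,
where the matrix `A(τ)` acts on Euclidean space `ℝ^N`. -/
noncomputable def volterraRHS {N : ℕ} (α : ℝ) (A : ℝ → Matrix (Fin N) (Fin N) ℝ)
    (F : ℝ → EuclideanSpace ℝ (Fin N)) (c : ℝ → EuclideanSpace ℝ (Fin N)) (t : ℝ) :
    EuclideanSpace ℝ (Fin N) :=
  (-(1 / Real.Gamma α)) •
      (∫ τ in (0 : ℝ)..t, ((t - τ) ^ (α - 1)) • (Matrix.toEuclideanCLM (𝕜 := ℝ) (A τ)) (c τ))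
    + (1 / Real.Gamma α) • ∫ τ in (0 : ℝ)..t, ((t - τ) ^ (α - 1)) • F τ

/-!
Write `I^α g (t) = ∫₀ᵗ (t - τ)^(α-1) g(τ) dτ`. For bounded measurable `g` the function `I^α g` is
`α`-Hölder on `[0, T]`, so `c ↦ -(1/Γ(α)) I^α (A c) + (1/Γ(α)) I^α F` maps functions continuous
on `[0, T]` to continuous functions. Since `∫₀ᵗ (t - τ)^(α-1) e^{lτ} dτ ≤ e^{lt} Γ(α) / l^α`,
this map is Lipschitz with constant `‖A‖_∞ / l^α` for Bielecki's weighted norm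
`sup_t e^{-lt} ‖c(t)‖`; for `l` large it is a contraction, and Banach's fixed point theorem
gives existence and uniqueness.
-/

open Set Real
open scoped Interval

section Kernel

variable {α : ℝ}

lemma intervalIntegrable_sub_rpow (hα : 0 < α) (t a b : ℝ) :
    IntervalIntegrable (fun τ : ℝ => (t - τ) ^ (α - 1)) volume a b := by
  simpa using ((intervalIntegral.intervalIntegrable_rpow' (a := t - b) (b := t - a)
    (by linarith : -1 < α - 1)).comp_sub_left t).symm

lemma integral_sub_rpow (hα : 0 < α) (t a b : ℝ) :
    ∫ τ in a..b, (t - τ) ^ (α - 1) = ((t - a) ^ α - (t - b) ^ α) / α := by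
  rw [intervalIntegral.integral_comp_sub_left (fun x : ℝ => x ^ (α - 1)),
    integral_rpow (Or.inl (by linarith)), sub_add_cancel]

/-- The substitution `x = t - τ` turns the left side into `e^{lt}` times an incomplete
Gamma integral. -/
lemma integral_sub_rpow_mul_exp_le (hα : 0 < α) {l t : ℝ} (hl : 0 < l) (ht : 0 ≤ t) :
    ∫ τ in (0 : ℝ)..t, (t - τ) ^ (α - 1) * exp (l * τ) ≤ exp (l * t) * (Gamma α / l ^ α) := by
  have hsubst : ∫ τ in (0 : ℝ)..t, (t - τ) ^ (α - 1) * exp (l * τ) =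
      exp (l * t) * ∫ x in (0 : ℝ)..t, x ^ (α - 1) * exp (-(l * x)) := by
    have h := intervalIntegral.integral_comp_sub_left (a := 0) (b := t)
      (fun x => exp (l * t) * (x ^ (α - 1) * exp (-(l * x)))) t
    rw [sub_self, sub_zero] at h
    rw [← intervalIntegral.integral_const_mul, ← h]
    refine intervalIntegral.integral_congr fun τ _ => ?_
    rw [mul_left_comm, ← exp_add]
    ring_nf
  have hint : IntegrableOn (fun x : ℝ => x ^ (α - 1) * exp (-(l * x))) (Ioi 0) := by
    simpa using integrableOn_rpow_mul_exp_neg_mul_rpow (p := 1) (s := α - 1) (by linarith)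
      zero_lt_one hl
  have hGamma : ∫ x in Ioi (0 : ℝ), x ^ (α - 1) * exp (-(l * x)) = Gamma α / l ^ α := by
    have := integral_rpow_mul_exp_neg_mul_rpow (p := 1) (q := α - 1) one_pos (by linarith) hl
    simp only [rpow_one, sub_add_cancel, div_one, mul_one, neg_mul] at this
    rw [this, rpow_neg hl.le]
    ring
  rw [hsubst, ← hGamma, intervalIntegral.integral_of_le ht]
  gcongr
  · filter_upwards [ae_restrict_mem measurableSet_Ioi] with x hx
    exact mul_nonneg (rpow_nonneg (le_of_lt hx) _) (exp_nonneg _)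
  · exact Ioc_subset_Ioi_self

end Kernel

section RiemannLiouville

variable {E : Type*} [NormedAddCommGroup E] [NormedSpace ℝ E] {α T C : ℝ} {g : ℝ → E}

/-- The Riemann–Liouville integral of order `α` with base point `0`, without the
factor `1 / Γ(α)`. -/
noncomputable def rlIntegral (α : ℝ) (g : ℝ → E) (t : ℝ) : E :=
  ∫ τ in (0 : ℝ)..t, (t - τ) ^ (α - 1) • g τ

lemma norm_integral_smul_le_integral_mul {k h : ℝ → ℝ} {a b : ℝ} (hab : a ≤ b)
    (hk : ∀ᵐ τ ∂volume.restrict (Ioc a b), 0 ≤ k τ)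
    (hg : ∀ᵐ τ ∂volume.restrict (Ioc a b), ‖g τ‖ ≤ h τ)
    (hkh : IntervalIntegrable (fun τ => k τ * h τ) volume a b) :
    ‖∫ τ in a..b, k τ • g τ‖ ≤ ∫ τ in a..b, k τ * h τ := by
  refine intervalIntegral.norm_integral_le_of_norm_le hab ?_ hkh
  rw [← ae_restrict_iff' measurableSet_Ioc]
  filter_upwards [hk, hg] with τ hkτ hgτ
  rw [norm_smul, Real.norm_of_nonneg hkτ]
  exact mul_le_mul_of_nonneg_left hgτ hkτ

lemma intervalIntegrable_rpow_smul (hα : 0 < α) (t : ℝ) {a b : ℝ}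
    (hg : AEStronglyMeasurable g (volume.restrict (Ι a b)))
    (hC : ∀ᵐ τ ∂volume.restrict (Ι a b), ‖g τ‖ ≤ C) :
    IntervalIntegrable (fun τ => (t - τ) ^ (α - 1) • g τ) volume a b :=
  intervalIntegrable_iff.2 ((intervalIntegrable_sub_rpow hα t a b).def'.smul_bdd C hg hC)

lemma intervalIntegrable_rpow_smul_of_mem (hα : 0 < α)
    (hg : AEStronglyMeasurable g (volume.restrict (Icc 0 T)))
    (hC : ∀ᵐ τ ∂volume.restrict (Icc 0 T), ‖g τ‖ ≤ C) (t : ℝ) {a b : ℝ}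
    (ha : a ∈ Icc 0 T) (hb : b ∈ Icc 0 T) :
    IntervalIntegrable (fun τ => (t - τ) ^ (α - 1) • g τ) volume a b :=
  have hsub : Ι a b ⊆ Icc 0 T := uIoc_subset_uIcc.trans (uIcc_subset_Icc ha hb)
  intervalIntegrable_rpow_smul hα t (hg.mono_set hsub)
    (ae_restrict_of_ae_restrict_of_subset hsub hC)

/-- Split at `s`: on `[s, t]` the kernel integrates to `(t - s)^α / α`; on `[0, s]` the
kernel difference `(s - τ)^(α-1) - (t - τ)^(α-1) ≥ 0` integrates to
`(s^α - t^α + (t - s)^α) / α ≤ (t - s)^α / α` by subadditivity of `x ↦ x^α`. -/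
lemma norm_rlIntegral_sub_le (hα : 0 < α) (hα1 : α ≤ 1) (hC0 : 0 ≤ C)
    (hg : AEStronglyMeasurable g (volume.restrict (Icc 0 T)))
    (hC : ∀ᵐ τ ∂volume.restrict (Icc 0 T), ‖g τ‖ ≤ C)
    {s t : ℝ} (hs : 0 ≤ s) (hst : s ≤ t) (ht : t ≤ T) :
    ‖rlIntegral α g t - rlIntegral α g s‖ ≤ 2 * C / α * (t - s) ^ α := by
  have h0I : (0 : ℝ) ∈ Icc 0 T := ⟨le_rfl, hs.trans (hst.trans ht)⟩
  have hsI : s ∈ Icc 0 T := ⟨hs, hst.trans ht⟩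
  have htI : t ∈ Icc 0 T := ⟨hs.trans hst, ht⟩
  have hC_Ioc : ∀ {a b : ℝ}, 0 ≤ a → b ≤ T → ∀ᵐ τ ∂volume.restrict (Ioc a b), ‖g τ‖ ≤ C :=
    fun ha hb => ae_restrict_of_ae_restrict_of_subset (Ioc_subset_Icc_self.trans
      (Icc_subset_Icc ha hb)) hC
  have hsplit : rlIntegral α g t - rlIntegral α g s =
      (∫ τ in (0 : ℝ)..s, ((s - τ) ^ (α - 1) - (t - τ) ^ (α - 1)) • -g τ) +
        ∫ τ in s..t, (t - τ) ^ (α - 1) • g τ := by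
    rw [rlIntegral, rlIntegral, ← intervalIntegral.integral_add_adjacent_intervals
      (intervalIntegrable_rpow_smul_of_mem hα hg hC t h0I hsI)
      (intervalIntegrable_rpow_smul_of_mem hα hg hC t hsI htI), add_sub_right_comm,
      ← intervalIntegral.integral_sub (intervalIntegrable_rpow_smul_of_mem hα hg hC t h0I hsI)
      (intervalIntegrable_rpow_smul_of_mem hα hg hC s h0I hsI)]
    congr 1
    exact intervalIntegral.integral_congr fun τ _ => by module
  have hkernel : IntervalIntegrable (fun τ => ((s - τ) ^ (α - 1) - (t - τ) ^ (α - 1)) * C)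
      volume 0 s :=
    ((intervalIntegrable_sub_rpow hα s 0 s).sub (intervalIntegrable_sub_rpow hα t 0 s)).mul_const C
  have hpast : ‖∫ τ in (0 : ℝ)..s, ((s - τ) ^ (α - 1) - (t - τ) ^ (α - 1)) • -g τ‖ ≤
      C / α * (t - s) ^ α := by
    have hk : ∀ᵐ τ ∂volume.restrict (Ioc 0 s), 0 ≤ (s - τ) ^ (α - 1) - (t - τ) ^ (α - 1) := by
      rw [← ae_restrict_congr_set Ioo_ae_eq_Ioc]
      filter_upwards [ae_restrict_mem measurableSet_Ioo] with τ hτ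
      exact sub_nonneg.2 (rpow_le_rpow_of_nonpos (by linarith [hτ.2]) (by linarith) (by linarith))
    calc _ ≤ ∫ τ in (0 : ℝ)..s, ((s - τ) ^ (α - 1) - (t - τ) ^ (α - 1)) * C :=
          norm_integral_smul_le_integral_mul hs hk
            ((hC_Ioc le_rfl (hst.trans ht)).mono fun τ h => (norm_neg (g τ)).trans_le h) hkernel
      _ = C / α * (s ^ α - t ^ α + (t - s) ^ α) := by
          rw [intervalIntegral.integral_mul_const, intervalIntegral.integral_sub
            (intervalIntegrable_sub_rpow hα s 0 s) (intervalIntegrable_sub_rpow hα t 0 s),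
            integral_sub_rpow hα, integral_sub_rpow hα, sub_self, zero_rpow hα.ne']
          ring_nf
      _ ≤ C / α * (t - s) ^ α := by
          have hsub : t ^ α ≤ s ^ α + (t - s) ^ α := by
            simpa using rpow_add_le_add_rpow hs (sub_nonneg.2 hst) hα.le hα1
          gcongr
          linarith [rpow_le_rpow hs hst hα.le]
  have hrecent : ‖∫ τ in s..t, (t - τ) ^ (α - 1) • g τ‖ ≤ C / α * (t - s) ^ α := by
    calc _ ≤ ∫ τ in s..t, (t - τ) ^ (α - 1) * C :=
          norm_integral_smul_le_integral_mul hst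
            (by filter_upwards [ae_restrict_mem measurableSet_Ioc] with τ hτ
                exact rpow_nonneg (by linarith [hτ.2]) _)
            (hC_Ioc hs ht) ((intervalIntegrable_sub_rpow hα t s t).mul_const C)
      _ = C / α * (t - s) ^ α := by
          rw [intervalIntegral.integral_mul_const, integral_sub_rpow hα, sub_self,
            zero_rpow hα.ne']
          ring
  calc _ ≤ _ := hsplit ▸ norm_add_le _ _
    _ ≤ C / α * (t - s) ^ α + C / α * (t - s) ^ α := add_le_add hpast hrecent
    _ = 2 * C / α * (t - s) ^ α := by ring

lemma holderOnWith_rlIntegral (hα : 0 < α) (hα1 : α ≤ 1) (hC0 : 0 ≤ C)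
    (hg : AEStronglyMeasurable g (volume.restrict (Icc 0 T)))
    (hC : ∀ᵐ τ ∂volume.restrict (Icc 0 T), ‖g τ‖ ≤ C) :
    HolderOnWith (2 * C / α).toNNReal α.toNNReal (rlIntegral α g) (Icc 0 T) := by
  intro s hs t ht
  wlog hst : s ≤ t generalizing s t
  · rw [edist_comm, edist_comm s]
    exact this t ht s hs (le_of_not_ge hst)
  rw [edist_comm, edist_comm s, edist_dist, edist_dist, dist_eq_norm, Real.dist_eq,
    abs_of_nonneg (sub_nonneg.2 hst), Real.coe_toNNReal _ hα.le,
    ENNReal.ofReal_rpow_of_nonneg (sub_nonneg.2 hst) hα.le,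
    show ((2 * C / α).toNNReal : ENNReal) = ENNReal.ofReal (2 * C / α) from rfl,
    ← ENNReal.ofReal_mul (by positivity)]
  exact ENNReal.ofReal_le_ofReal (norm_rlIntegral_sub_le hα hα1 hC0 hg hC hs.1 hst ht.2)

lemma continuousOn_rlIntegral (hα : 0 < α) (hα1 : α ≤ 1)
    (hg : AEStronglyMeasurable g (volume.restrict (Icc 0 T)))
    (hC : ∀ᵐ τ ∂volume.restrict (Icc 0 T), ‖g τ‖ ≤ C) :
    ContinuousOn (rlIntegral α g) (Icc 0 T) :=
  (holderOnWith_rlIntegral hα hα1 (le_max_right C 0) hg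
    (hC.mono fun _ h => h.trans (le_max_left C 0))).continuousOn (Real.toNNReal_pos.2 hα)

lemma norm_rlIntegral_le_of_norm_le_exp (hα : 0 < α) {l t : ℝ} (hl : 0 < l) (ht : 0 ≤ t)
    (hC0 : 0 ≤ C) (hC : ∀ᵐ τ ∂volume.restrict (Ioc 0 t), ‖g τ‖ ≤ C * exp (l * τ)) :
    ‖rlIntegral α g t‖ ≤ C * (exp (l * t) * (Gamma α / l ^ α)) := by
  have hk : ∀ᵐ τ ∂volume.restrict (Ioc 0 t), 0 ≤ (t - τ) ^ (α - 1) := by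
    filter_upwards [ae_restrict_mem measurableSet_Ioc] with τ hτ
    exact rpow_nonneg (by linarith [hτ.2]) _
  have hint : IntervalIntegrable (fun τ => (t - τ) ^ (α - 1) * exp (l * τ)) volume 0 t :=
    (intervalIntegrable_sub_rpow hα t 0 t).mul_continuousOn (by fun_prop)
  calc ‖rlIntegral α g t‖ ≤ ∫ τ in (0 : ℝ)..t, (t - τ) ^ (α - 1) * (C * exp (l * τ)) :=
        norm_integral_smul_le_integral_mul ht hk hC
          (by simpa only [mul_left_comm] using hint.const_mul C)
    _ = C * ∫ τ in (0 : ℝ)..t, (t - τ) ^ (α - 1) * exp (l * τ) := by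
        rw [← intervalIntegral.integral_const_mul]
        simp only [mul_left_comm]
    _ ≤ C * (exp (l * t) * (Gamma α / l ^ α)) := by
        gcongr
        exact integral_sub_rpow_mul_exp_le hα hl ht

end RiemannLiouville

section Bielecki

variable {E : Type*} [NormedAddCommGroup E] [NormedSpace ℝ E] {T : ℝ}

noncomputable def expWeight (hT : 0 ≤ T) (l : ℝ) (u : C(Icc 0 T, E)) (t : ℝ) : E :=
  exp (l * t) • IccExtend hT u t

lemma continuous_expWeight (hT : 0 ≤ T) (l : ℝ) (u : C(Icc 0 T, E)) :
    Continuous (expWeight hT l u) :=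
  (continuous_exp.comp (continuous_const.mul continuous_id)).smul u.continuous.Icc_extend'

lemma expWeight_of_mem (hT : 0 ≤ T) (l : ℝ) (u : C(Icc 0 T, E)) {t : ℝ} (ht : t ∈ Icc 0 T) :
    expWeight hT l u t = exp (l * t) • u ⟨t, ht⟩ := by
  rw [expWeight, IccExtend_of_mem hT u ht]

lemma exists_expWeight_eqOn (hT : 0 ≤ T) (l : ℝ) {c : ℝ → E} (hc : ContinuousOn c (Icc 0 T)) :
    ∃ u : C(Icc 0 T, E), EqOn (expWeight hT l u) c (Icc 0 T) :=
  ⟨⟨fun s => exp (-(l * s)) • c s,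
    (by fun_prop : Continuous fun s : Icc 0 T => exp (-(l * s))).smul hc.domRestrict⟩,
    fun t ht => by
      rw [expWeight_of_mem hT l _ ht, ContinuousMap.coe_mk, exp_neg,
        smul_inv_smul₀ (exp_ne_zero _)]⟩

lemma norm_expWeight_sub_le (hT : 0 ≤ T) (l : ℝ) (u v : C(Icc 0 T, E)) {s : ℝ}
    (hs : s ∈ Icc 0 T) :
    ‖expWeight hT l u s - expWeight hT l v s‖ ≤ dist u v * exp (l * s) := by
  rw [expWeight_of_mem hT l u hs, expWeight_of_mem hT l v hs, ← smul_sub, norm_smul,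
    norm_of_nonneg (exp_pos _).le, mul_comm, ← dist_eq_norm]
  gcongr
  exact ContinuousMap.dist_apply_le_dist _

/-- Bielecki's method: conjugating `Φ` by the weight `e^{lt}` gives a `K`-contraction of
`C([0, T], E)` with the sup norm. -/
theorem existsUnique_continuousOn_fixedPoint_of_expWeighted [CompleteSpace E]
    {Φ : (ℝ → E) → ℝ → E} {K l : ℝ} (hT : 0 ≤ T) (hK : K < 1)
    (hcont : ∀ u, ContinuousOn u (Icc 0 T) → ContinuousOn (Φ u) (Icc 0 T))
    (hlip : ∀ u v, ContinuousOn u (Icc 0 T) → ContinuousOn v (Icc 0 T) → ∀ D, 0 ≤ D →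
      (∀ s ∈ Icc 0 T, ‖u s - v s‖ ≤ D * exp (l * s)) →
      ∀ t ∈ Icc 0 T, ‖Φ u t - Φ v t‖ ≤ K * D * exp (l * t)) :
    ∃ c, (ContinuousOn c (Icc 0 T) ∧ ∀ t ∈ Icc 0 T, c t = Φ c t) ∧
      ∀ c', ContinuousOn c' (Icc 0 T) → (∀ t ∈ Icc 0 T, c' t = Φ c' t) →
        EqOn c' c (Icc 0 T) := by
  have hw : ∀ u : C(Icc 0 T, E), ContinuousOn (expWeight hT l u) (Icc 0 T) := fun u =>
    (continuous_expWeight hT l u).continuousOn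
  have hlocal : ∀ u v, ContinuousOn u (Icc 0 T) → ContinuousOn v (Icc 0 T) →
      EqOn u v (Icc 0 T) → EqOn (Φ u) (Φ v) (Icc 0 T) := fun u v hu hv huv t ht =>
    sub_eq_zero.1 <| norm_le_zero_iff.1 <| by
      simpa using hlip u v hu hv 0 le_rfl (fun s hs => by simp [huv hs]) t ht
  let S : C(Icc 0 T, E) → C(Icc 0 T, E) := fun u =>
    ⟨fun s => exp (-(l * s)) • Φ (expWeight hT l u) s,
      (by fun_prop : Continuous fun s : Icc 0 T => exp (-(l * s))).smul
        (hcont _ (hw u)).domRestrict⟩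
  have hS : ContractingWith K.toNNReal S := by
    refine ⟨toNNReal_lt_one.2 hK, LipschitzWith.of_dist_le_mul fun u v => ?_⟩
    refine (ContinuousMap.dist_le (by positivity)).2 fun s => ?_
    have h := hlip _ _ (hw u) (hw v) _ dist_nonneg
      (fun s hs => norm_expWeight_sub_le hT l u v hs) s s.2
    calc dist (S u s) (S v s)
        = exp (-(l * s)) * ‖Φ (expWeight hT l u) s - Φ (expWeight hT l v) s‖ := by
          rw [dist_eq_norm, ← norm_of_nonneg (exp_pos (-(l * s))).le, ← norm_smul, smul_sub]
          rfl
      _ ≤ exp (-(l * s)) * (K * dist u v * exp (l * s)) := by gcongr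
      _ = K * dist u v := by
          rw [mul_comm, exp_neg, mul_assoc, mul_inv_cancel₀ (exp_pos _).ne', mul_one]
      _ ≤ K.toNNReal * dist u v := by gcongr; exact le_coe_toNNReal K
  have : Nonempty C(Icc 0 T, E) := ⟨0⟩
  obtain ⟨x, hx⟩ : ∃ x, Function.IsFixedPt S x := ⟨_, hS.fixedPoint_isFixedPt⟩
  have hfix : ∀ (c : ℝ → E) (u : C(Icc 0 T, E)), EqOn (expWeight hT l u) c (Icc 0 T) →
      ((∀ t ∈ Icc 0 T, c t = Φ c t) ↔ Function.IsFixedPt S u) := by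
    intro c u hu
    have hΦ := hlocal _ _ (hw u) ((hw u).congr hu.symm) hu
    simp only [Function.IsFixedPt, ContinuousMap.ext_iff, Subtype.forall]
    refine forall₂_congr fun t ht => ?_
    have hut : u ⟨t, ht⟩ = exp (-(l * t)) • c t := by
      rw [← hu ht, expWeight_of_mem hT l u ht, exp_neg, inv_smul_smul₀ (exp_ne_zero _)]
    rw [show S u ⟨t, ht⟩ = exp (-(l * t)) • Φ c t from congrArg _ (hΦ ht), hut,
      smul_right_inj (exp_pos _).ne', eq_comm]
  refine ⟨expWeight hT l x, ⟨hw x, (hfix _ x fun _ _ => rfl).2 hx⟩, fun c' hc' hc'Φ => ?_⟩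
  obtain ⟨u, hu⟩ := exists_expWeight_eqOn hT l hc'
  rw [hS.fixedPoint_unique' ((hfix c' u hu).1 hc'Φ) hx] at hu
  exact hu.symm

end Bielecki

section Volterra

variable {E : Type*} [NormedAddCommGroup E] [NormedSpace ℝ E] {α T M : ℝ}
  {B : ℝ → E →L[ℝ] E} {u v : ℝ → E}

lemma aestronglyMeasurable_clm_apply (hB : AEStronglyMeasurable B (volume.restrict (Icc 0 T)))
    (hu : ContinuousOn u (Icc 0 T)) :
    AEStronglyMeasurable (fun τ => B τ (u τ)) (volume.restrict (Icc 0 T)) :=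
  (ContinuousLinearMap.id ℝ (E →L[ℝ] E)).aestronglyMeasurable_comp₂ hB
    (hu.aestronglyMeasurable measurableSet_Icc)

lemma exists_ae_bound_clm_apply (hBM : ∀ᵐ τ ∂volume.restrict (Icc 0 T), ‖B τ‖ ≤ M)
    (hu : ContinuousOn u (Icc 0 T)) :
    ∃ C, ∀ᵐ τ ∂volume.restrict (Icc 0 T), ‖B τ (u τ)‖ ≤ C := by
  obtain ⟨R, hR⟩ := isCompact_Icc.exists_bound_of_continuousOn hu
  refine ⟨M * R, ?_⟩
  filter_upwards [hBM, ae_restrict_mem measurableSet_Icc] with τ hBτ hτ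
  exact (B τ).le_of_opNorm_le hBτ _ |>.trans <|
    mul_le_mul_of_nonneg_left (hR τ hτ) ((norm_nonneg _).trans hBτ)

lemma continuousOn_rlIntegral_clm_apply (hα : 0 < α) (hα1 : α ≤ 1)
    (hB : AEStronglyMeasurable B (volume.restrict (Icc 0 T)))
    (hBM : ∀ᵐ τ ∂volume.restrict (Icc 0 T), ‖B τ‖ ≤ M) (hu : ContinuousOn u (Icc 0 T)) :
    ContinuousOn (rlIntegral α fun τ => B τ (u τ)) (Icc 0 T) :=
  have ⟨_, hC⟩ := exists_ae_bound_clm_apply hBM hu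
  continuousOn_rlIntegral hα hα1 (aestronglyMeasurable_clm_apply hB hu) hC

lemma norm_rlIntegral_clm_apply_sub_le (hα : 0 < α) {l D t : ℝ} (hl : 0 < l) (hM0 : 0 ≤ M)
    (hD : 0 ≤ D) (hB : AEStronglyMeasurable B (volume.restrict (Icc 0 T)))
    (hBM : ∀ᵐ τ ∂volume.restrict (Icc 0 T), ‖B τ‖ ≤ M) (hu : ContinuousOn u (Icc 0 T))
    (hv : ContinuousOn v (Icc 0 T)) (huv : ∀ s ∈ Icc 0 T, ‖u s - v s‖ ≤ D * exp (l * s))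
    (ht : t ∈ Icc 0 T) :
    ‖rlIntegral α (fun τ => B τ (u τ)) t - rlIntegral α (fun τ => B τ (v τ)) t‖ ≤
      M * D * (exp (l * t) * (Gamma α / l ^ α)) := by
  have h0 : (0 : ℝ) ∈ Icc 0 T := ⟨le_rfl, ht.1.trans ht.2⟩
  have hint : ∀ {w : ℝ → E}, ContinuousOn w (Icc 0 T) →
      IntervalIntegrable (fun τ => (t - τ) ^ (α - 1) • B τ (w τ)) volume 0 t := fun hw =>
    have ⟨_, hC⟩ := exists_ae_bound_clm_apply hBM hw
    intervalIntegrable_rpow_smul_of_mem hα (aestronglyMeasurable_clm_apply hB hw) hC t h0 ht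
  have hsub : rlIntegral α (fun τ => B τ (u τ)) t - rlIntegral α (fun τ => B τ (v τ)) t =
      rlIntegral α (fun τ => B τ (u τ - v τ)) t := by
    rw [rlIntegral, rlIntegral, rlIntegral, ← intervalIntegral.integral_sub (hint hu) (hint hv)]
    simp only [map_sub, smul_sub]
  rw [hsub]
  refine norm_rlIntegral_le_of_norm_le_exp hα hl ht.1 (mul_nonneg hM0 hD) ?_
  have hIoc : Ioc 0 t ⊆ Icc 0 T := Ioc_subset_Icc_self.trans (Icc_subset_Icc le_rfl ht.2)
  filter_upwards [ae_restrict_of_ae_restrict_of_subset hIoc hBM,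
    ae_restrict_mem measurableSet_Ioc] with τ hBτ hτ
  rw [mul_assoc]
  exact (B τ).le_of_opNorm_le hBτ _ |>.trans <|
    mul_le_mul_of_nonneg_left (huv τ (hIoc hτ)) hM0

theorem existsUnique_continuousOn_volterra [CompleteSpace E] {a : ℝ} {g : ℝ → E} (hα : 0 < α)
    (hα1 : α ≤ 1) (hT : 0 ≤ T) (hB : AEStronglyMeasurable B (volume.restrict (Icc 0 T)))
    (hBM : ∀ᵐ τ ∂volume.restrict (Icc 0 T), ‖B τ‖ ≤ M) (hg : ContinuousOn g (Icc 0 T)) :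
    ∃ c : ℝ → E, (ContinuousOn c (Icc 0 T) ∧
        ∀ t ∈ Icc 0 T, c t = a • rlIntegral α (fun τ => B τ (c τ)) t + g t) ∧
      ∀ c', ContinuousOn c' (Icc 0 T) →
        (∀ t ∈ Icc 0 T, c' t = a • rlIntegral α (fun τ => B τ (c' τ)) t + g t) →
        EqOn c' c (Icc 0 T) := by
  obtain ⟨M, hM0, hBM⟩ : ∃ M', 0 ≤ M' ∧ ∀ᵐ τ ∂volume.restrict (Icc 0 T), ‖B τ‖ ≤ M' :=
    ⟨max M 0, le_max_right _ _, hBM.mono fun _ h => h.trans (le_max_left _ _)⟩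
  have hΓ := Gamma_pos_of_pos hα
  set L := 2 * (|a| * M * Gamma α) + 1
  obtain ⟨l, hl, hlα⟩ : ∃ l, 0 < l ∧ l ^ α = L :=
    ⟨L ^ α⁻¹, by positivity, by rw [← rpow_mul (by positivity), inv_mul_cancel₀ hα.ne', rpow_one]⟩
  have hK : |a| * M * (Gamma α / l ^ α) < 1 := by
    rw [hlα, ← mul_div_assoc, div_lt_one (by positivity)]
    linarith [mul_nonneg (mul_nonneg (abs_nonneg a) hM0) hΓ.le]
  refine existsUnique_continuousOn_fixedPoint_of_expWeighted
    (Φ := fun c t => a • rlIntegral α (fun τ => B τ (c τ)) t + g t) (l := l) hT hK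
    (fun u hu => ((continuousOn_rlIntegral_clm_apply hα hα1 hB hBM hu).const_smul a).add hg)
    (fun u v hu hv D hD huv t ht => ?_)
  rw [add_sub_add_right_eq_sub, ← smul_sub, norm_smul, Real.norm_eq_abs]
  calc _ ≤ |a| * (M * D * (exp (l * t) * (Gamma α / l ^ α))) := by
        gcongr
        exact norm_rlIntegral_clm_apply_sub_le hα hl hM0 hD hB hBM hu hv huv ht
    _ = |a| * M * (Gamma α / l ^ α) * D * exp (l * t) := by ring

end Volterra

lemma aestronglyMeasurable_toEuclideanCLM {N : ℕ} {A : ℝ → Matrix (Fin N) (Fin N) ℝ}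
    (hA : Measurable fun (t : ℝ) (i j : Fin N) => A t i j) (μ : Measure ℝ) :
    AEStronglyMeasurable (fun t => Matrix.toEuclideanCLM (𝕜 := ℝ) (A t)) μ :=
  (LinearMap.continuous_of_finiteDimensional
    (Matrix.toEuclideanCLM (𝕜 := ℝ) (n := Fin N)).toAlgEquiv.toLinearMap).comp_aestronglyMeasurable
    hA.aestronglyMeasurable

/-- If `0 < α < 1`, `A : [0,T] → M_N(ℝ)` is measurable and essentially bounded (in the
operator norm) and `F : [0,T] → ℝ^N` is measurable and essentially bounded, then the
Volterra integral equation
`c(t) = -(1/Γ(α)) ∫_0^t (t-τ)^(α-1) A(τ) c(τ) dτ + (1/Γ(α)) ∫_0^t (t-τ)^(α-1) F(τ) dτ`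
has exactly one continuous solution `c : [0,T] → ℝ^N`. -/
theorem volterra_equation_existence_uniqueness
    (α T : ℝ) (hα : 0 < α) (hα1 : α < 1) (hT : 0 < T) (N : ℕ)
    (A : ℝ → Matrix (Fin N) (Fin N) ℝ) (F : ℝ → EuclideanSpace ℝ (Fin N))
    (hAmeas : Measurable fun (t : ℝ) (i j : Fin N) => A t i j)
    (hAbdd : ∃ M : ℝ, ∀ᵐ t ∂(volume.restrict (Set.Icc (0 : ℝ) T)),
        ‖Matrix.toEuclideanCLM (𝕜 := ℝ) (A t)‖ ≤ M)
    (hFmeas : Measurable F)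
    (hFbdd : ∃ M : ℝ, ∀ᵐ t ∂(volume.restrict (Set.Icc (0 : ℝ) T)), ‖F t‖ ≤ M) :
    ∃ c : ℝ → EuclideanSpace ℝ (Fin N),
      (ContinuousOn c (Set.Icc 0 T) ∧ ∀ t ∈ Set.Icc (0 : ℝ) T, c t = volterraRHS α A F c t) ∧
      ∀ c' : ℝ → EuclideanSpace ℝ (Fin N),
        ContinuousOn c' (Set.Icc 0 T) → (∀ t ∈ Set.Icc (0 : ℝ) T, c' t = volterraRHS α A F c' t) →
        Set.EqOn c' c (Set.Icc 0 T) := by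
  obtain ⟨M, hAM⟩ := hAbdd
  obtain ⟨MF, hFM⟩ := hFbdd
  have hF : ContinuousOn ((1 / Gamma α) • rlIntegral α F) (Icc 0 T) :=
    (continuousOn_rlIntegral hα hα1.le hFmeas.aestronglyMeasurable hFM).const_smul _
  exact existsUnique_continuousOn_volterra (a := -(1 / Gamma α)) hα hα1.le hT.le
    (aestronglyMeasurable_toEuclideanCLM hAmeas _) hAM hF
end

section
/- Let 0 < α < 1, T > 0, C ≥ 0, and let v ∈ L^1([0,T];ℝ) satisfy v(t) ≥ 0 for almost every t ∈ (0,T) and v(t) ≤ C ∫₀^t (t-s)^{α-1} v(s) ds for almost every t ∈ (0,T). Then v(t) = 0 for almost every t ∈ (0,T). -/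
/-!
Weight both sides by `exp (-r t)` with `r > 0`. Since `exp (-r t) = exp (-r (t - s)) * exp (-r s)`,
Tonelli and translation invariance bound the weighted integral of the right-hand side by
`C * (∫₀^∞ u ^ (α - 1) * exp (-r u) du) = C * Γ(α) / r ^ α` times the weighted integral of `v`
itself. For `r` large this factor is `< 1`, so the (finite) weighted integral of `v⁺` vanishes.
-/

open MeasureTheory Set Real Filter
open scoped ENNReal Topology

theorem ofReal_integral_le_lintegral_ofReal {X : Type*} [MeasurableSpace X] {μ : Measure X}
    (f : X → ℝ) : ENNReal.ofReal (∫ x, f x ∂μ) ≤ ∫⁻ x, ENNReal.ofReal (f x) ∂μ := by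
  by_cases hf : Integrable f μ
  · rw [integral_eq_lintegral_pos_part_sub_lintegral_neg_part hf]
    exact (ENNReal.ofReal_le_ofReal (sub_le_self _ ENNReal.toReal_nonneg)).trans
      ENNReal.ofReal_toReal_le
  · simp [integral_undef hf]

theorem setLIntegral_exp_mul_conv_le (r : ℝ) {k g : ℝ → ℝ≥0∞} (hk : Measurable k) {S : Set ℝ}
    (hg : AEMeasurable g (volume.restrict S)) :
    ∫⁻ t in S, ENNReal.ofReal (exp (-(r * t))) * ∫⁻ s in S, k (t - s) * g s ≤
      (∫⁻ u, ENNReal.ofReal (exp (-(r * u))) * k u) *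
        ∫⁻ s in S, ENNReal.ofReal (exp (-(r * s))) * g s := by
  set e : ℝ → ℝ≥0∞ := fun u ↦ ENNReal.ofReal (exp (-(r * u))) with he
  have he_meas : Measurable e := by fun_prop
  have he_mul (t s : ℝ) : e t = e (t - s) * e s := by
    rw [he, ← ENNReal.ofReal_mul (exp_nonneg _), ← exp_add]
    ring_nf
  calc ∫⁻ t in S, e t * ∫⁻ s in S, k (t - s) * g s
      = ∫⁻ t in S, ∫⁻ s in S, e t * (k (t - s) * g s) :=
        lintegral_congr fun t ↦ (lintegral_const_mul' _ _ ENNReal.ofReal_ne_top).symm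
    _ = ∫⁻ s in S, ∫⁻ t in S, e (t - s) * k (t - s) * (e s * g s) := by
        rw [lintegral_lintegral_swap]
        · refine lintegral_congr fun s ↦ lintegral_congr fun t ↦ ?_
          rw [he_mul t s]
          ring
        · exact (he_meas.comp measurable_fst).aemeasurable.mul
            ((hk.comp measurable_sub).aemeasurable.mul hg.comp_snd)
    _ ≤ ∫⁻ s in S, (∫⁻ t, e (t - s) * k (t - s)) * (e s * g s) :=
        lintegral_mono fun s ↦ (setLIntegral_le_lintegral _ _).trans_eq
          (lintegral_mul_const _ ((he_meas.mul hk).comp (measurable_sub_const s)))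
    _ = (∫⁻ u, e u * k u) * ∫⁻ s in S, e s * g s := by
        simp_rw [lintegral_sub_right_eq_self (fun u ↦ e u * k u)]
        exact lintegral_const_mul'' _ (he_meas.aemeasurable.mul hg)

theorem ae_eq_zero_of_le_mul_lintegral_conv (r : ℝ) {k g : ℝ → ℝ≥0∞} {c : ℝ≥0∞}
    (hc : c ≠ ∞) (hk : Measurable k) {S : Set ℝ} (hg : AEMeasurable g (volume.restrict S))
    (hg_fin : ∫⁻ s in S, ENNReal.ofReal (exp (-(r * s))) * g s ≠ ∞)
    (hck : c * ∫⁻ u, ENNReal.ofReal (exp (-(r * u))) * k u < 1)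
    (hle : ∀ᵐ t ∂volume.restrict S, g t ≤ c * ∫⁻ s in S, k (t - s) * g s) :
    ∀ᵐ t ∂volume.restrict S, g t = 0 := by
  have he : Measurable fun s ↦ ENNReal.ofReal (exp (-(r * s))) := by fun_prop
  set I := ∫⁻ s in S, ENNReal.ofReal (exp (-(r * s))) * g s
  have hI : I ≤ (c * ∫⁻ u, ENNReal.ofReal (exp (-(r * u))) * k u) * I :=
    calc I ≤ ∫⁻ t in S, c * (ENNReal.ofReal (exp (-(r * t))) * ∫⁻ s in S, k (t - s) * g s) :=
          lintegral_mono_ae (hle.mono fun t ht ↦ by rw [mul_left_comm]; gcongr)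
      _ = c * ∫⁻ t in S, ENNReal.ofReal (exp (-(r * t))) * ∫⁻ s in S, k (t - s) * g s :=
          lintegral_const_mul' c _ hc
      _ ≤ _ := by
          rw [mul_assoc]
          exact mul_le_mul_right (setLIntegral_exp_mul_conv_le r hk hg) c
  have hI0 : I = 0 := by
    by_contra hI0
    exact lt_irrefl I
      (hI.trans_lt ((ENNReal.mul_lt_mul_left hI0 hg_fin hck).trans_eq (one_mul I)))
  filter_upwards [(lintegral_eq_zero_iff' (he.aemeasurable.mul hg)).mp hI0] with t ht
  exact (mul_eq_zero.mp ht).resolve_left (by simp [exp_pos])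

noncomputable def powerKernel (α u : ℝ) : ℝ≥0∞ :=
  (Ioi 0).indicator (fun u ↦ ENNReal.ofReal (u ^ (α - 1))) u

theorem measurable_powerKernel (α : ℝ) : Measurable (powerKernel α) :=
  Measurable.indicator (by fun_prop) measurableSet_Ioi

theorem lintegral_exp_mul_powerKernel {α r : ℝ} (hα : 0 < α) (hr : 0 < r) :
    ∫⁻ u, ENNReal.ofReal (exp (-(r * u))) * powerKernel α u =
      ENNReal.ofReal ((1 / r) ^ α * Gamma α) := by
  have hint : IntegrableOn (fun u ↦ u ^ (α - 1) * exp (-(r * u))) (Ioi 0) :=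
    .of_integral_ne_zero (by rw [integral_rpow_mul_exp_neg_mul_Ioi hα hr]; positivity)
  rw [← integral_rpow_mul_exp_neg_mul_Ioi hα hr, ofReal_integral_eq_lintegral_ofReal hint
    ((ae_restrict_iff' measurableSet_Ioi).mpr (ae_of_all _ fun u (hu : 0 < u) ↦ by positivity)),
    ← lintegral_indicator measurableSet_Ioi]
  refine lintegral_congr fun u ↦ ?_
  by_cases hu : u ∈ Ioi 0
  · simp only [powerKernel, indicator_of_mem hu, ← ENNReal.ofReal_mul (exp_nonneg _), mul_comm]
  · simp only [powerKernel, indicator_of_notMem hu, mul_zero]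

theorem exists_mul_lintegral_exp_mul_powerKernel_lt_one {α : ℝ} (hα : 0 < α) (C : ℝ) :
    ∃ r, 0 < r ∧
      ENNReal.ofReal C * ∫⁻ u, ENNReal.ofReal (exp (-(r * u))) * powerKernel α u < 1 := by
  have hlim : Tendsto (fun r : ℝ ↦ C * ((1 / r) ^ α * Gamma α)) atTop (𝓝 0) := by
    have := ((tendsto_rpow_neg_atTop hα).mul_const (Gamma α)).const_mul C
    rw [zero_mul, mul_zero] at this
    refine this.congr' ((eventually_gt_atTop 0).mono fun r hr ↦ ?_)
    dsimp only
    rw [rpow_neg hr.le, one_div, inv_rpow hr.le]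
  obtain ⟨r, hr_small, hr_pos⟩ :=
    ((hlim.eventually (gt_mem_nhds one_pos)).and (eventually_gt_atTop 0)).exists
  refine ⟨r, hr_pos, ?_⟩
  rw [lintegral_exp_mul_powerKernel hα hr_pos, ← ENNReal.ofReal_mul' (by positivity)]
  exact ENNReal.ofReal_lt_one.mpr hr_small

theorem ofReal_intervalIntegral_le_lintegral_powerKernel (α : ℝ) (v : ℝ → ℝ) {t : ℝ}
    (ht : 0 ≤ t) {S : Set ℝ} (hS : Ioo 0 t ⊆ S) :
    ENNReal.ofReal (∫ s in 0..t, (t - s) ^ (α - 1) * v s) ≤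
      ∫⁻ s in S, powerKernel α (t - s) * ENNReal.ofReal (v s) := by
  rw [intervalIntegral.integral_of_le ht, integral_Ioc_eq_integral_Ioo]
  calc _ ≤ ∫⁻ s in Ioo 0 t, ENNReal.ofReal ((t - s) ^ (α - 1) * v s) :=
        ofReal_integral_le_lintegral_ofReal _
    _ = ∫⁻ s in Ioo 0 t, powerKernel α (t - s) * ENNReal.ofReal (v s) := by
        refine setLIntegral_congr_fun measurableSet_Ioo fun s hs ↦ ?_
        have hts : 0 < t - s := sub_pos.mpr hs.2
        rw [powerKernel, indicator_of_mem (mem_Ioi.mpr hts),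
          ENNReal.ofReal_mul (rpow_nonneg hts.le _)]
    _ ≤ _ := lintegral_mono_set hS

theorem gronwall_singular_kernel_general (α T C : ℝ) (hα : 0 < α)
    (hC : 0 ≤ C) (v : ℝ → ℝ)
    (hv : IntegrableOn v (Set.Icc 0 T) volume)
    (hnonneg : ∀ᵐ t ∂(volume.restrict (Set.Ioo (0 : ℝ) T)), 0 ≤ v t)
    (hineq : ∀ᵐ t ∂(volume.restrict (Set.Ioo (0 : ℝ) T)),
        v t ≤ C * ∫ s in (0 : ℝ)..t, (t - s) ^ (α - 1) * v s) :
    ∀ᵐ t ∂(volume.restrict (Set.Ioo (0 : ℝ) T)), v t = 0 := by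
  obtain ⟨r, hr, hsmall⟩ := exists_mul_lintegral_exp_mul_powerKernel_lt_one hα C
  have hv' : IntegrableOn v (Ioo 0 T) := hv.mono_set Ioo_subset_Icc_self
  have hfin : ∫⁻ s in Ioo 0 T, ENNReal.ofReal (exp (-(r * s))) * ENNReal.ofReal (v s) ≠ ∞ := by
    refine ne_top_of_le_ne_top hv'.lintegral_lt_top.ne
      (setLIntegral_mono' measurableSet_Ioo fun s hs ↦ ?_)
    have : ENNReal.ofReal (exp (-(r * s))) ≤ 1 :=
      ENNReal.ofReal_le_one.mpr (exp_le_one_iff.mpr (by nlinarith [hs.1]))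
    simpa using mul_le_mul_left this (ENNReal.ofReal (v s))
  have hzero : ∀ᵐ t ∂volume.restrict (Ioo 0 T), ENNReal.ofReal (v t) = 0 := by
    refine ae_eq_zero_of_le_mul_lintegral_conv r ENNReal.ofReal_ne_top (measurable_powerKernel α)
      hv'.aemeasurable.ennreal_ofReal hfin hsmall ?_
    filter_upwards [hineq, ae_restrict_mem measurableSet_Ioo] with t ht ht_mem
    calc ENNReal.ofReal (v t)
        ≤ ENNReal.ofReal C * ENNReal.ofReal (∫ s in 0..t, (t - s) ^ (α - 1) * v s) := by
          rw [← ENNReal.ofReal_mul hC]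
          exact ENNReal.ofReal_le_ofReal ht
      _ ≤ _ := by
          gcongr
          exact ofReal_intervalIntegral_le_lintegral_powerKernel α v ht_mem.1.le
            (Ioo_subset_Ioo_right ht_mem.2.le)
  filter_upwards [hzero, hnonneg] with t h0 hpos
  exact le_antisymm (ENNReal.ofReal_eq_zero.mp h0) hpos

/-- Gronwall-type lemma with a weakly singular kernel: if `0 < α < 1`, `T > 0`, `C ≥ 0`,
`v ∈ L¹([0,T])`, `v ≥ 0` a.e. on `(0,T)` and
`v(t) ≤ C ∫_0^t (t-s)^(α-1) v(s) ds` for a.e. `t ∈ (0,T)`, then `v = 0` a.e. on `(0,T)`. -/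
theorem gronwall_singular_kernel (α T C : ℝ) (hα : 0 < α) (hα1 : α < 1) (hT : 0 < T)
    (hC : 0 ≤ C) (v : ℝ → ℝ)
    (hv : IntegrableOn v (Set.Icc 0 T) volume)
    (hnonneg : ∀ᵐ t ∂(volume.restrict (Set.Ioo (0 : ℝ) T)), 0 ≤ v t)
    (hineq : ∀ᵐ t ∂(volume.restrict (Set.Ioo (0 : ℝ) T)),
        v t ≤ C * ∫ s in (0 : ℝ)..t, (t - s) ^ (α - 1) * v s) :
    ∀ᵐ t ∂(volume.restrict (Set.Ioo (0 : ℝ) T)), v t = 0 :=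
  gronwall_singular_kernel_general α T C hα hC v hv hnonneg hineq
end
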